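/- arXiv:1708.01590 — 4 statements merged into one kernel-verified Lean document; each statement's English description precedes it below -/
import Mathlib

section
/- For any non-zero symmetric real n×n matrix A with entries a_{i,j}, the rank of A is at least (∑_i a_{i,i})² / (∑_{i,j} a_{i,j}²). -/
/-!
With `λ` the eigenvalues of `A`, the trace is `∑ λᵢ`, the sum of squared entries is
`tr (A * A) = ∑ λᵢ²`, and the rank is the number of nonzero `λᵢ`. Cauchy–Schwarz applied to the
nonzero eigenvalues gives `(∑ λᵢ)² ≤ rank A · ∑ λᵢ²`.
-/

open Finset Matrix

theorem sq_sum_div_sum_sq_le_card_ne_zero {ι : Type*} [Fintype ι] (f : ι → ℝ) :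
    (∑ i, f i) ^ 2 / ∑ i, f i ^ 2 ≤ Fintype.card {i // f i ≠ 0} := by
  classical
  have hsum : ∑ i, f i = ∑ i with f i ≠ 0, f i := (sum_filter_ne_zero _).symm
  have hsum_sq : ∑ i, f i ^ 2 = ∑ i with f i ≠ 0, f i ^ 2 :=
    (sum_filter_of_ne fun _ _ ↦ (pow_ne_zero_iff two_ne_zero).mp).symm
  rw [hsum, hsum_sq, Fintype.card_subtype]
  exact div_le_of_le_mul₀ (sum_nonneg fun i _ ↦ sq_nonneg _) (Nat.cast_nonneg _)
    sq_sum_le_card_mul_sum_sq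

theorem Matrix.IsSymm.trace_mul_self_eq_sum_sq {n R : Type*} [Fintype n] [CommSemiring R]
    {A : Matrix n n R} (hA : A.IsSymm) : (A * A).trace = ∑ i, ∑ j, A i j ^ 2 := by
  simp only [trace, diag, mul_apply, sq]
  rw [sum_comm]
  exact sum_congr rfl fun i _ ↦ sum_congr rfl fun j _ ↦ by rw [hA.apply]

theorem Matrix.IsHermitian.trace_mul_self_eq_sum_sq_eigenvalues {n 𝕜 : Type*} [Fintype n]
    [DecidableEq n] [RCLike 𝕜] {A : Matrix n n 𝕜} (hA : A.IsHermitian) :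
    (A * A).trace = ∑ i, (hA.eigenvalues i : 𝕜) ^ 2 := by
  conv_lhs => rw [hA.spectral_theorem, ← map_mul, Unitary.conjStarAlgAut_apply, trace_mul_cycle,
    Unitary.coe_star_mul_self, one_mul, diagonal_mul_diagonal, trace_diagonal]
  simp [sq]

theorem rank_lower_bound_general (n : ℕ) (A : Matrix (Fin n) (Fin n) ℝ)
    (hA : A.IsSymm) :
    ((∑ i, A i i) ^ 2) / (∑ i, ∑ j, (A i j) ^ 2) ≤ (A.rank : ℝ) := by
  have hH : A.IsHermitian := isHermitian_iff_isSymm.mpr hA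
  have htrace : ∑ i, A i i = ∑ i, hH.eigenvalues i := by
    simpa [trace] using hH.trace_eq_sum_eigenvalues
  have hsum_sq : ∑ i, ∑ j, A i j ^ 2 = ∑ i, hH.eigenvalues i ^ 2 := by
    simpa [hA.trace_mul_self_eq_sum_sq] using hH.trace_mul_self_eq_sum_sq_eigenvalues
  rw [htrace, hsum_sq, hH.rank_eq_card_non_zero_eigs]
  exact sq_sum_div_sum_sq_le_card_ne_zero _

theorem rank_lower_bound (n : ℕ) (A : Matrix (Fin n) (Fin n) ℝ)
    (hA : A.IsSymm) (hA0 : A ≠ 0) :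
    ((∑ i, A i i) ^ 2) / (∑ i, ∑ j, (A i j) ^ 2) ≤ (A.rank : ℝ) :=
  rank_lower_bound_general n A hA
end

section
/- Let C be a unit simplex in ℝ^d with centroid c, and let F be a nonempty subset of C with centroid f. Then ‖c − f‖² = (1/2)(1/|F| − 1/|C|). -/
/-!
Both centroids are affine combinations of the vertices, so `c - f = ∑ v ∈ C, w v • v` with weights
`w v = 1/|C| - [v ∈ F]/|F|` summing to zero. For weights summing to zero, `‖∑ w v • v‖²` is
`-½ ∑ w u w v ‖u - v‖²`; on a unit simplex `‖u - v‖² = 1 - [u = v]`, which leaves `½ ∑ w v²`,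
and this sum of squares is `1/|F| - 1/|C|`.
-/

open Finset

theorem norm_sq_sum_smul_of_pairwise_dist_eq_one {E : Type*} [NormedAddCommGroup E]
    [InnerProductSpace ℝ E] {s : Finset E} (hs : ∀ u ∈ s, ∀ v ∈ s, u ≠ v → dist u v = 1)
    {w : E → ℝ} (hw : ∑ v ∈ s, w v = 0) :
    ‖∑ v ∈ s, w v • v‖ ^ 2 = (∑ v ∈ s, w v ^ 2) / 2 := by
  classical
  have row : ∀ u ∈ s, ∑ v ∈ s, w u * w v * (‖u - v‖ * ‖u - v‖) = -w u ^ 2 := by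
    intro u hu
    calc ∑ v ∈ s, w u * w v * (‖u - v‖ * ‖u - v‖)
        = ∑ v ∈ s, (w u * w v - if u = v then w u * w v else 0) := by
          refine sum_congr rfl fun v hv => ?_
          by_cases huv : u = v
          · simp [huv]
          · simp [huv, ← dist_eq_norm, hs u hu v hv huv]
      _ = -w u ^ 2 := by
          rw [sum_sub_distrib, ← mul_sum, hw, sum_ite_eq, if_pos hu]
          ring
  rw [← real_inner_self_eq_norm_sq, inner_sum_smul_sum_smul_of_sum_eq_zero _ hw _ hw,
    sum_congr rfl row, sum_neg_distrib, neg_neg]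

section CentroidSubWeight

variable {α : Type*} [DecidableEq α] {C F : Finset α}

noncomputable def centroidSubWeight (C F : Finset α) (v : α) : ℝ :=
  (#C : ℝ)⁻¹ - if v ∈ F then (#F : ℝ)⁻¹ else 0

theorem sum_centroidSubWeight_smul {M : Type*} [AddCommGroup M] [Module ℝ M] (hFC : F ⊆ C)
    (x : α → M) :
    ∑ v ∈ C, centroidSubWeight C F v • x v
      = (#C : ℝ)⁻¹ • ∑ v ∈ C, x v - (#F : ℝ)⁻¹ • ∑ v ∈ F, x v := by
  simp only [centroidSubWeight, sub_smul, ite_smul, zero_smul, sum_sub_distrib, sum_ite_mem,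
    inter_eq_right.mpr hFC, smul_sum]

theorem sum_centroidSubWeight (hF : F.Nonempty) (hFC : F ⊆ C) :
    ∑ v ∈ C, centroidSubWeight C F v = 0 := by
  have hFne : (#F : ℝ) ≠ 0 := by exact_mod_cast hF.card_pos.ne'
  have hCne : (#C : ℝ) ≠ 0 := by exact_mod_cast (hF.mono hFC).card_pos.ne'
  unfold centroidSubWeight
  rw [sum_sub_distrib, sum_ite_mem, inter_eq_right.mpr hFC]
  simp [hFne, hCne]

theorem sum_centroidSubWeight_sq (hF : F.Nonempty) (hFC : F ⊆ C) :
    ∑ v ∈ C, centroidSubWeight C F v ^ 2 = 1 / (#F : ℝ) - 1 / (#C : ℝ) := by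
  have hFne : (#F : ℝ) ≠ 0 := by exact_mod_cast hF.card_pos.ne'
  have hCne : (#C : ℝ) ≠ 0 := by exact_mod_cast (hF.mono hFC).card_pos.ne'
  have expand : ∀ v ∈ C, centroidSubWeight C F v ^ 2
      = (#C : ℝ)⁻¹ ^ 2 - if v ∈ F then 2 * (#C : ℝ)⁻¹ * (#F : ℝ)⁻¹ - (#F : ℝ)⁻¹ ^ 2 else 0 := by
    intro v _
    unfold centroidSubWeight
    split_ifs <;> ring
  rw [sum_congr rfl expand, sum_sub_distrib, sum_ite_mem, inter_eq_right.mpr hFC]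
  simp only [sum_const, nsmul_eq_mul]
  field_simp
  ring

end CentroidSubWeight

theorem unit_simplex_centroid_dist (d : ℕ) (C F : Finset (EuclideanSpace ℝ (Fin d)))
    (hF : F.Nonempty) (hFC : F ⊆ C)
    (hunit : ∀ u ∈ C, ∀ v ∈ C, u ≠ v → dist u v = 1)
    (c f : EuclideanSpace ℝ (Fin d))
    (hc : c = (C.card : ℝ)⁻¹ • ∑ v ∈ C, v)
    (hf : f = (F.card : ℝ)⁻¹ • ∑ v ∈ F, v) :
    ‖c - f‖ ^ 2 = (1 / 2) * (1 / (F.card : ℝ) - 1 / (C.card : ℝ)) := by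
  have hcf : c - f = ∑ v ∈ C, centroidSubWeight C F v • v := by
    rw [hc, hf]
    exact (sum_centroidSubWeight_smul hFC id).symm
  rw [hcf, norm_sq_sum_smul_of_pairwise_dist_eq_one hunit (sum_centroidSubWeight hF hFC),
    sum_centroidSubWeight_sq hF hFC]
  ring
end

section
/- Let V be an almost-equidistant set in ℝ^d and let C ⊆ V be a clique of maximum cardinality k in the unit-distance graph on V (i.e., a maximal-size subset of V with all pairwise distances 1). Then |V| ≤ k² + k. -/
/-!
Fix a maximum clique `C` of the unit-distance graph on `V`. For `c ∈ C`, the points of `V` other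
than `c` at distance `≠ 1` from `c` form a clique: any two of them, together with `c`, span a
triple in which only the pair itself can be at distance `1`. Hence each such set has at most `k`
points. By maximality every point of `V \ C` is at distance `≠ 1` from some `c ∈ C`, so `V` is
covered by `C` and these `k` sets, giving `|V| ≤ k + k · k`.
-/

open Finset

namespace SimpleGraph

variable {α : Type*} {G : SimpleGraph α}

lemma exists_not_adj_of_notMem_of_isClique_max [DecidableEq α] {V C : Finset α} (hCV : C ⊆ V)
    (hC : G.IsClique (C : Set α)) (hmax : ∀ C' ⊆ V, G.IsClique (C' : Set α) → #C' ≤ #C)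
    {x : α} (hxV : x ∈ V) (hxC : x ∉ C) : ∃ c ∈ C, ¬G.Adj c x := by
  by_contra! h
  have hclique : G.IsClique (insert x C : Finset α) := by
    rw [coe_insert]
    exact hC.insert fun c hc _ => (h c hc).symm
  have := hmax _ (insert_subset hxV hCV) hclique
  rw [card_insert_of_notMem hxC] at this
  omega

def nonNeighborFinset (G : SimpleGraph α) [DecidableEq α] [DecidableRel G.Adj] (V : Finset α)
    (c : α) : Finset α :=
  {x ∈ V.erase c | ¬G.Adj c x}

section

variable [DecidableEq α] [DecidableRel G.Adj]

@[simp]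
lemma mem_nonNeighborFinset {V : Finset α} {c x : α} :
    x ∈ G.nonNeighborFinset V c ↔ x ≠ c ∧ x ∈ V ∧ ¬G.Adj c x := by
  simp [nonNeighborFinset, and_assoc]

lemma isClique_nonNeighborFinset {V : Finset α}
    (hV : ∀ x ∈ V, ∀ y ∈ V, ∀ z ∈ V, x ≠ y → y ≠ z → x ≠ z →
      G.Adj x y ∨ G.Adj y z ∨ G.Adj x z)
    {c : α} (hc : c ∈ V) :
    G.IsClique (G.nonNeighborFinset V c : Set α) := by
  intro u hu v hv huv
  simp only [mem_coe, mem_nonNeighborFinset] at hu hv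
  obtain ⟨huc, huV, hcu⟩ := hu
  obtain ⟨hvc, hvV, hcv⟩ := hv
  rcases hV u huV v hvV c hc huv hvc huc with h | h | h
  · exact h
  · exact absurd h.symm hcv
  · exact absurd h.symm hcu

lemma subset_union_biUnion_nonNeighborFinset {V C : Finset α} (hCV : C ⊆ V)
    (hC : G.IsClique (C : Set α)) (hmax : ∀ C' ⊆ V, G.IsClique (C' : Set α) → #C' ≤ #C) :
    V ⊆ C ∪ C.biUnion (G.nonNeighborFinset V) := by
  intro x hxV
  by_cases hxC : x ∈ C
  · exact mem_union_left _ hxC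
  obtain ⟨c, hc, hcx⟩ := exists_not_adj_of_notMem_of_isClique_max hCV hC hmax hxV hxC
  refine mem_union_right _ (mem_biUnion.2 ⟨c, hc, ?_⟩)
  exact mem_nonNeighborFinset.2 ⟨fun h => hxC (h ▸ hc), hxV, hcx⟩

end

theorem card_le_sq_add_of_isClique_max {V C : Finset α}
    (hV : ∀ x ∈ V, ∀ y ∈ V, ∀ z ∈ V, x ≠ y → y ≠ z → x ≠ z →
      G.Adj x y ∨ G.Adj y z ∨ G.Adj x z)
    (hCV : C ⊆ V) (hC : G.IsClique (C : Set α))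
    (hmax : ∀ C' ⊆ V, G.IsClique (C' : Set α) → #C' ≤ #C) :
    #V ≤ #C ^ 2 + #C := by
  classical
  have hnon : ∀ c ∈ C, #(G.nonNeighborFinset V c) ≤ #C := fun c hc =>
    hmax _ (filter_subset _ _ |>.trans (erase_subset _ _))
      (isClique_nonNeighborFinset hV (hCV hc))
  calc #V ≤ #(C ∪ C.biUnion (G.nonNeighborFinset V)) :=
        card_le_card (subset_union_biUnion_nonNeighborFinset hCV hC hmax)
    _ ≤ #C + ∑ c ∈ C, #(G.nonNeighborFinset V c) :=
        (card_union_le _ _).trans (Nat.add_le_add_left card_biUnion_le _)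
    _ ≤ #C + ∑ _c ∈ C, #C := Nat.add_le_add_left (sum_le_sum hnon) _
    _ = #C ^ 2 + #C := by rw [sum_const, smul_eq_mul, sq, add_comm]

end SimpleGraph

def unitDistanceGraph (α : Type*) [PseudoMetricSpace α] : SimpleGraph α where
  Adj x y := x ≠ y ∧ dist x y = 1
  symm := ⟨fun x y h => ⟨h.1.symm, dist_comm x y ▸ h.2⟩⟩
  loopless := ⟨fun _ h => h.1 rfl⟩

lemma isClique_unitDistanceGraph_iff {α : Type*} [PseudoMetricSpace α] {s : Finset α} :
    (unitDistanceGraph α).IsClique (s : Set α) ↔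
      ∀ u ∈ s, ∀ v ∈ s, u ≠ v → dist u v = 1 := by
  simp only [SimpleGraph.IsClique, Set.Pairwise, mem_coe, unitDistanceGraph]
  exact forall₄_congr fun _ _ _ _ => imp_congr_right fun huv => and_iff_right huv

theorem almost_equidistant_card_le_max_clique (d k : ℕ)
    (V C : Finset (EuclideanSpace ℝ (Fin d)))
    (hAE : ∀ x ∈ V, ∀ y ∈ V, ∀ z ∈ V, x ≠ y → y ≠ z → x ≠ z →
      dist x y = 1 ∨ dist y z = 1 ∨ dist x z = 1)
    (hCV : C ⊆ V)
    (hclique : ∀ u ∈ C, ∀ v ∈ C, u ≠ v → dist u v = 1)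
    (hmax : ∀ C' ⊆ V, (∀ u ∈ C', ∀ v ∈ C', u ≠ v → dist u v = 1) → C'.card ≤ C.card)
    (hk : C.card = k) :
    V.card ≤ k ^ 2 + k := by
  classical
  subst hk
  refine (unitDistanceGraph _).card_le_sq_add_of_isClique_max ?_ hCV
    (isClique_unitDistanceGraph_iff.2 hclique)
    fun C' hC'V hC' => hmax C' hC'V (isClique_unitDistanceGraph_iff.1 hC')
  intro x hx y hy z hz hxy hyz hxz
  simpa only [unitDistanceGraph, hxy, hyz, hxz, ne_eq, not_false_eq_true, true_and]
    using hAE x hx y hy z hz hxy hyz hxz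
end

section
/- For every d ≥ 3, there exists an almost-equidistant set in ℝ^d of cardinality 2d + 3. -/
open scoped RealInnerProductSpace
open Module

/-- all-ones vector -/
noncomputable def oneV (n : ℕ) : EuclideanSpace ℝ (Fin n) := WithLp.toLp 2 (fun _ => 1)

lemma inner_oneV_oneV (n : ℕ) : ⟪oneV n, oneV n⟫ = (n : ℝ) := by
  simp only [oneV, PiLp.inner_apply]
  simp [Finset.sum_const]

lemma inner_oneV_single (n : ℕ) (j : Fin n) (a : ℝ) :
    ⟪oneV n, EuclideanSpace.single j a⟫ = a := by
  simp [oneV, EuclideanSpace.inner_single_right]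

lemma inner_single_oneV (n : ℕ) (j : Fin n) (a : ℝ) :
    ⟪EuclideanSpace.single j a, oneV n⟫ = a := by
  simp [oneV, EuclideanSpace.inner_single_left]

lemma inner_single_single (n : ℕ) (i j : Fin n) (a b : ℝ) :
    ⟪EuclideanSpace.single i a, EuclideanSpace.single j b⟫ = if i = j then a * b else 0 := by
  rcases eq_or_ne i j with rfl | h
  · simp [EuclideanSpace.inner_single_left, EuclideanSpace.single_apply, mul_comm]
  · simp [EuclideanSpace.inner_single_left, EuclideanSpace.single_apply, h, Ne.symm h]

lemma oneV_ne_zero (n : ℕ) (hn : 0 < n) : oneV n ≠ 0 := by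
  intro h
  have := congrArg (fun x : EuclideanSpace ℝ (Fin n) => x ⟨0, hn⟩) h
  simp [oneV] at this

lemma aux_sq_norm {F : Type*} [NormedAddCommGroup F] [InnerProductSpace ℝ F] (x : F) :
    ‖x‖ ^ 2 = ⟪x, x⟫ := (real_inner_self_eq_norm_sq x).symm

/-- a scaled regular simplex: k+1 points in a k-dim space, pairwise squared distance 2,
circumradius² k/(k+1), centered at the origin. -/
lemma exists_simplex (F : Type*) [NormedAddCommGroup F] [InnerProductSpace ℝ F]
    [FiniteDimensional ℝ F] (m : ℕ) (hm : finrank ℝ F + 1 = m) :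
    ∃ w : Fin m → F, (∀ i j, i ≠ j → ‖w i - w j‖ ^ 2 = 2) ∧
      (∀ i, ‖w i‖ ^ 2 = ((m:ℝ) - 1) / m) := by
  classical
  set k := finrank ℝ F with hk'
  have hk : finrank ℝ F = k := rfl
  obtain rfl : m = k + 1 := by omega
  have hcast : ((k:ℝ) + 1 - 1)/((k:ℝ)+1) = k / (k+1) := by push_cast; ring
  suffices h : ∃ w : Fin (k+1) → F, (∀ i j, i ≠ j → ‖w i - w j‖ ^ 2 = 2) ∧
      (∀ i, ‖w i‖ ^ 2 = k / (k + 1)) by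
    obtain ⟨w, h1, h2⟩ := h
    exact ⟨w, h1, fun i => by rw [h2 i]; push_cast; ring⟩
  have hk1 : ((k : ℝ) + 1) ≠ 0 := by positivity
  set one := oneV (k + 1) with hone
  set Z := (Submodule.span ℝ ({one} : Set (EuclideanSpace ℝ (Fin (k+1)))))ᗮ with hZ
  have hfrZ : finrank ℝ Z = k := by
    have h1 : finrank ℝ (Submodule.span ℝ ({one} : Set (EuclideanSpace ℝ (Fin (k+1))))) = 1 :=
      finrank_span_singleton (oneV_ne_zero _ (by omega))
    have h2 := Submodule.finrank_add_finrank_orthogonal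
      (K := Submodule.span ℝ ({one} : Set (EuclideanSpace ℝ (Fin (k+1)))))
    have h3 : finrank ℝ (EuclideanSpace ℝ (Fin (k+1))) = k + 1 := by
      simp [finrank_euclideanSpace]
    rw [← hZ] at h2
    omega
  set w0 : Fin (k+1) → EuclideanSpace ℝ (Fin (k+1)) :=
    fun i => EuclideanSpace.single i 1 - ((k:ℝ)+1)⁻¹ • one with hw0
  have hximem : ∀ i, ⟪one, w0 i⟫ = 0 := by
    intro i
    simp only [hw0, inner_sub_right, real_inner_smul_right, hone,
      inner_oneV_single, inner_oneV_oneV]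
    push_cast
    field_simp
    norm_num
  have hmem : ∀ i, w0 i ∈ Z := by
    intro i
    rw [hZ, Submodule.mem_orthogonal]
    intro u hu
    rw [Submodule.mem_span_singleton] at hu
    obtain ⟨t, rfl⟩ := hu
    rw [real_inner_smul_left, hximem i, mul_zero]
  have hdist : ∀ i j : Fin (k+1), i ≠ j → ‖w0 i - w0 j‖ ^ 2 = 2 := by
    intro i j hij
    have h : w0 i - w0 j = EuclideanSpace.single i 1 - EuclideanSpace.single j 1 := by
      rw [hw0]; beta_reduce; abel
    rw [aux_sq_norm, h]
    simp only [inner_sub_left, inner_sub_right, inner_single_single]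
    simp [hij, Ne.symm hij]
    norm_num
  have hnrm : ∀ i, ‖w0 i‖ ^ 2 = k / (k + 1) := by
    intro i
    rw [aux_sq_norm, hw0]
    simp only [inner_sub_left, inner_sub_right, real_inner_smul_left, real_inner_smul_right,
      inner_single_single, hone, inner_oneV_single, inner_single_oneV, inner_oneV_oneV,
      if_pos trivial, if_true]
    push_cast
    field_simp
    ring
  have hfr : finrank ℝ F = finrank ℝ Z := by rw [hfrZ, hk]
  let e : Z ≃ₗᵢ[ℝ] F :=
    (stdOrthonormalBasis ℝ Z).repr.trans
      ((stdOrthonormalBasis ℝ F).reindex <| finCongr hfr).repr.symm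
  refine ⟨fun i => e ⟨w0 i, hmem i⟩, ?_, ?_⟩
  · intro i j hij
    rw [← LinearIsometryEquiv.map_sub, e.norm_map]
    have : ‖(⟨w0 i, hmem i⟩ - ⟨w0 j, hmem j⟩ : Z)‖ = ‖w0 i - w0 j‖ := by norm_cast
    rw [this]; exact hdist i j hij
  · intro i
    rw [e.norm_map]
    exact hnrm i

set_option maxHeartbeats 4000000

theorem exists_almost_equidistant_of_card (d : ℕ) (hd : 3 ≤ d) :
    ∃ V : Finset (EuclideanSpace ℝ (Fin d)),
      (∀ x ∈ V, ∀ y ∈ V, ∀ z ∈ V, x ≠ y → y ≠ z → x ≠ z →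
        dist x y = 1 ∨ dist y z = 1 ∨ dist x z = 1) ∧
      V.card = 2 * d + 3 := by
  classical
  have hdR : (3:ℝ) ≤ (d:ℝ) := by exact_mod_cast hd
  set D : ℝ := (d:ℝ) with hDdef
  have hD0 : (0:ℝ) < D := by simp only [hDdef]; positivity
  have hD1 : D + 1 ≠ 0 := by positivity
  have hDne : D ≠ 0 := ne_of_gt hD0
  -- special indices
  set i0 : Fin (d+1) := ⟨0, by omega⟩ with hi0
  set i1 : Fin (d+1) := ⟨1, by omega⟩ with hi1
  set i2 : Fin (d+1) := ⟨2, by omega⟩ with hi2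
  have h01 : i0 ≠ i1 := by simp [hi0, hi1, Fin.ext_iff]
  have h02 : i0 ≠ i2 := by simp [hi0, hi2, Fin.ext_iff]
  have h12 : i1 ≠ i2 := by simp [hi1, hi2, Fin.ext_iff]
  -- basic vectors
  set one := oneV (d+1) with honedef
  set v : Fin (d+1) → EuclideanSpace ℝ (Fin (d+1)) := fun j => EuclideanSpace.single j 1
    with hvdef
  -- basic inner products
  have hone_one : ⟪one, one⟫ = D + 1 := by
    rw [honedef, inner_oneV_oneV]; push_cast [hDdef]; ring
  have hone_v : ∀ j, ⟪one, v j⟫ = 1 := fun j => by rw [hvdef, inner_oneV_single]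
  have hv_one : ∀ j, ⟪v j, one⟫ = 1 := fun j => by rw [hvdef, honedef, inner_single_oneV]
  have hvv : ∀ i j, ⟪v i, v j⟫ = if i = j then 1 else 0 := by
    intro i j; rw [hvdef]
    simpa using inner_single_single (d+1) i j 1 1
  -- the two apexes and related vectors
  set lam : ℝ := D / (4*(D+1)) with hlam
  set mu : ℝ := Real.sqrt ((7*D+8)/(8*(D+1))) with hmu
  have hmu2 : mu^2 = (7*D+8)/(8*(D+1)) := Real.sq_sqrt (by positivity)
  have hmu0 : 0 < mu := Real.sqrt_pos.2 (by positivity)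
  have hmu_lt1 : mu < 1 := by
    have h1 : mu^2 < 1 := by
      rw [hmu2, div_lt_one (by positivity)]; linarith
    nlinarith [hmu0]
  have hmu_ne_half : mu ≠ 1/2 := by
    intro h; rw [h] at hmu2
    have h8 : (8:ℝ)*(D+1) ≠ 0 := by positivity
    field_simp at hmu2; linarith
  set A1 : EuclideanSpace ℝ (Fin (d+1)) := (2/D) • one - (2 + 2/D) • v i0 with hA1def
  set W : EuclideanSpace ℝ (Fin (d+1)) := v i1 - v i2 with hWdef
  set av : EuclideanSpace ℝ (Fin (d+1)) := v i0 + lam • A1 + mu • W with havdef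
  set av' : EuclideanSpace ℝ (Fin (d+1)) := v i0 + A1 with hav'def
  set mv : EuclideanSpace ℝ (Fin (d+1)) := v i0 + ((lam+1)/2) • A1 + (mu/2) • W with hmvdef
  set nv : EuclideanSpace ℝ (Fin (d+1)) := av - av' with hnvdef
  have hnv_eq : nv = (lam - 1) • A1 + mu • W := by
    rw [hnvdef, havdef, hav'def, sub_smul, one_smul]; abel
  -- inner products of composite vectors
  have hA1A1 : ⟪A1, A1⟫ = 4*(D+1)/D := by
    simp only [hA1def, inner_sub_left, inner_sub_right, real_inner_smul_left,
      real_inner_smul_right, hone_one, hone_v, hv_one, hvv]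
    simp only [if_true, eq_self_iff_true]
    field_simp
    ring
  have hA1W : ⟪A1, W⟫ = 0 := by
    simp only [hA1def, hWdef, inner_sub_left, inner_sub_right, real_inner_smul_left,
      hone_v, hvv, if_neg h01, if_neg h02]
    ring
  have hWA1 : ⟪W, A1⟫ = 0 := by rw [real_inner_comm]; exact hA1W
  have hWW : ⟪W, W⟫ = 2 := by
    simp only [hWdef, inner_sub_left, inner_sub_right, hvv, if_pos rfl, if_neg h12,
      if_neg (Ne.symm h12)]
    norm_num
  have hA1v : ∀ j, ⟪A1, v j⟫ = if j = i0 then -2 else 2/D := by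
    intro j
    simp only [hA1def, inner_sub_left, real_inner_smul_left, hone_v, hvv]
    rcases eq_or_ne j i0 with rfl | hj
    · simp only [if_pos rfl]
      field_simp
      norm_num
      ring
    · rw [if_neg (fun h => hj h.symm), if_neg hj]
      ring
  have hvA1 : ∀ j, ⟪v j, A1⟫ = if j = i0 then -2 else 2/D := by
    intro j; rw [real_inner_comm]; exact hA1v j
  have hWv : ∀ j, ⟪W, v j⟫ = (if i1 = j then 1 else 0) - (if i2 = j then 1 else 0) := by
    intro j
    simp only [hWdef, inner_sub_left, hvv]
  have hvW : ∀ j, ⟪v j, W⟫ = (if i1 = j then 1 else 0) - (if i2 = j then 1 else 0) := by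
    intro j; rw [real_inner_comm]; exact hWv j
  have hone_A1 : ⟪one, A1⟫ = 0 := by
    simp only [hA1def, inner_sub_right, real_inner_smul_right, hone_one, hone_v]
    field_simp
    ring
  have hA1one : ⟪A1, one⟫ = 0 := by rw [real_inner_comm]; exact hone_A1
  have hone_W : ⟪one, W⟫ = 0 := by
    simp only [hWdef, inner_sub_right, hone_v]; ring
  have hWone : ⟪W, one⟫ = 0 := by rw [real_inner_comm]; exact hone_W
  have hone_nv : ⟪one, nv⟫ = 0 := by
    rw [hnv_eq]
    simp only [inner_add_right, real_inner_smul_right, hone_A1, hone_W]; ring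
  -- squared norms
  have hnv2 : ‖nv‖^2 = 4*(D+1)/D := by
    rw [aux_sq_norm, hnv_eq]
    simp only [inner_add_left, inner_add_right, real_inner_smul_left, real_inner_smul_right,
      hA1A1, hA1W, hWA1, hWW]
    simp only [hlam]
    linear_combination (norm := (field_simp; ring)) (2:ℝ) * hmu2
  have hav_v0 : ‖av - v i0‖^2 = 2 := by
    have h : av - v i0 = lam • A1 + mu • W := by rw [havdef]; abel
    rw [aux_sq_norm, h]
    simp only [inner_add_left, inner_add_right, real_inner_smul_left, real_inner_smul_right,
      hA1A1, hA1W, hWA1, hWW]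
    simp only [hlam]
    linear_combination (norm := (field_simp; ring)) (2:ℝ) * hmu2
  have hav'_v0 : ‖av' - v i0‖^2 = 4*(D+1)/D := by
    have h : av' - v i0 = A1 := by rw [hav'def]; abel
    rw [aux_sq_norm, h, hA1A1]
  have hav'_vj : ∀ j, j ≠ i0 → ‖av' - v j‖^2 = 2 := by
    intro j hj
    have hj' : ¬ (i0 = j) := fun h => hj h.symm
    have h : av' - v j = (v i0 - v j) + A1 := by rw [hav'def]; abel
    rw [aux_sq_norm, h]
    simp only [inner_add_left, inner_add_right, inner_sub_left, inner_sub_right,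
      hA1A1, hA1v, hvA1, hvv, if_pos rfl, if_neg hj, if_neg hj']
    simp only [if_true, eq_self_iff_true]
    field_simp
    ring
  have hav_vj : ∀ j, j ≠ i0 →
      ‖av - v j‖^2 = 3 + 2*mu*((if i2 = j then 1 else 0) - (if i1 = j then 1 else 0)) := by
    intro j hj
    have hj' : ¬ (i0 = j) := fun h => hj h.symm
    have h10 : ¬ (i1 = i0) := fun h => h01 h.symm
    have h20 : ¬ (i2 = i0) := fun h => h02 h.symm
    have h : av - v j = (v i0 - v j) + (lam • A1 + mu • W) := by rw [havdef]; abel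
    rw [aux_sq_norm, h]
    simp only [inner_add_left, inner_add_right, inner_sub_left, inner_sub_right,
      real_inner_smul_left, real_inner_smul_right,
      hA1A1, hA1v, hvA1, hA1W, hWA1, hWW, hWv, hvW, hvv,
      if_pos rfl, if_neg hj, if_neg hj', if_neg h10, if_neg h20]
    simp only [if_true, eq_self_iff_true]
    simp only [hlam]
    linear_combination (norm := (field_simp; ring)) (2:ℝ) * hmu2
  have hvv_dist : ∀ i j : Fin (d+1), i ≠ j → ‖v i - v j‖^2 = 2 := by
    intro i j hij
    have hij' : ¬ (j = i) := fun h => hij h.symm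
    rw [aux_sq_norm]
    simp only [inner_sub_left, inner_sub_right, hvv, if_pos rfl, if_neg hij, if_neg hij']
    simp only [if_true, eq_self_iff_true]
    norm_num
  -- the orthogonal subspace for the d-point simplex
  have hnv_ne : nv ≠ 0 := by
    intro h
    rw [h] at hnv2
    simp only [norm_zero] at hnv2
    have : (0:ℝ) < 4*(D+1)/D := by positivity
    rw [← hnv2] at this
    norm_num at this
  have hone_ne : one ≠ 0 := by rw [honedef]; exact oneV_ne_zero _ (by omega)
  have hli : LinearIndependent ℝ ![one, nv] := by
    rw [LinearIndependent.pair_iff]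
    intro s t hst
    have h1 : ⟪one, s • one + t • nv⟫ = 0 := by rw [hst, inner_zero_right]
    rw [inner_add_right, real_inner_smul_right, real_inner_smul_right, hone_one, hone_nv] at h1
    have hs : s = 0 := by
      have : s * (D+1) = 0 := by linarith
      rcases mul_eq_zero.1 this with h | h
      · exact h
      · exact absurd h hD1
    refine ⟨hs, ?_⟩
    rw [hs, zero_smul, zero_add] at hst
    rcases smul_eq_zero.1 hst with h | h
    · exact h
    · exact absurd h hnv_ne
  set K := (Submodule.span ℝ (Set.range ![one, nv]))ᗮ with hKdef
  have hKrank : Module.finrank ℝ K + 1 = d := by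
    have h1 : Module.finrank ℝ (Submodule.span ℝ (Set.range ![one, nv])) = 2 := by
      rw [finrank_span_eq_card hli]
      simp
    have h2 := Submodule.finrank_add_finrank_orthogonal
      (K := Submodule.span ℝ (Set.range ![one, nv]))
    rw [← hKdef] at h2
    have h3 : Module.finrank ℝ (EuclideanSpace ℝ (Fin (d+1))) = d + 1 := by
      simp [finrank_euclideanSpace]
    omega
  obtain ⟨w, hw0dist, hw0norm⟩ := exists_simplex K d hKrank
  have hwdist : ∀ i j : Fin d, i ≠ j → ‖(w i : EuclideanSpace ℝ (Fin (d+1))) - w j‖^2 = 2 := by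
    intro i j hij
    have hc : ((w i : K) : EuclideanSpace ℝ (Fin (d+1))) - ((w j : K) : EuclideanSpace ℝ (Fin (d+1)))
        = ((w i - w j : K) : EuclideanSpace ℝ (Fin (d+1))) := by norm_cast
    rw [hc, Submodule.norm_coe]
    exact hw0dist i j hij
  have hwnorm : ∀ i : Fin d, ‖(w i : EuclideanSpace ℝ (Fin (d+1)))‖^2 = (D-1)/D := by
    intro i
    rw [Submodule.norm_coe, hw0norm i, hDdef]
  -- orthogonality of w i to one and nv
  have hw_orth : ∀ (i : Fin d) (u : EuclideanSpace ℝ (Fin (d+1))),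
      u ∈ Submodule.span ℝ (Set.range ![one, nv]) → ⟪u, (w i : EuclideanSpace ℝ (Fin (d+1)))⟫ = 0 := by
    intro i u hu
    exact (Submodule.mem_orthogonal (Submodule.span ℝ (Set.range ![one, nv])) _).mp (w i).2 u hu
  have hone_mem : one ∈ Submodule.span ℝ (Set.range ![one, nv]) :=
    Submodule.subset_span ⟨0, rfl⟩
  have hnv_mem : nv ∈ Submodule.span ℝ (Set.range ![one, nv]) :=
    Submodule.subset_span ⟨1, rfl⟩
  have hw_one : ∀ i : Fin d, ⟪one, (w i : EuclideanSpace ℝ (Fin (d+1)))⟫ = 0 :=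
    fun i => hw_orth i one hone_mem
  have hw_nv : ∀ i : Fin d, ⟪nv, (w i : EuclideanSpace ℝ (Fin (d+1)))⟫ = 0 :=
    fun i => hw_orth i nv hnv_mem
  have hw_nv' : ∀ i : Fin d, ⟪(w i : EuclideanSpace ℝ (Fin (d+1))), nv⟫ = 0 :=
    fun i => by rw [real_inner_comm]; exact hw_nv i
  -- the d simplex points
  set p : Fin d → EuclideanSpace ℝ (Fin (d+1)) := fun i => mv + (w i : EuclideanSpace ℝ (Fin (d+1)))
    with hpdef
  have hpp : ∀ i j : Fin d, i ≠ j → ‖p i - p j‖^2 = 2 := by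
    intro i j hij
    have h : p i - p j = (w i : EuclideanSpace ℝ (Fin (d+1))) - w j := by rw [hpdef]; beta_reduce; abel
    rw [h]; exact hwdist i j hij
  have hmv_av : mv - av = (-(1/2 : ℝ)) • nv := by
    rw [hmvdef, havdef, hnv_eq]
    module
  have hmv_av' : mv - av' = ((1/2 : ℝ)) • nv := by
    rw [hmvdef, hav'def, hnv_eq]
    module
  have hpav : ∀ i : Fin d, ‖p i - av‖^2 = 2 := by
    intro i
    have h : p i - av = (w i : EuclideanSpace ℝ (Fin (d+1))) + (-(1/2 : ℝ)) • nv := by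
      rw [hpdef]
      rw [show mv + (w i : EuclideanSpace ℝ (Fin (d+1))) - av
        = (w i : EuclideanSpace ℝ (Fin (d+1))) + (mv - av) by abel, hmv_av]
    rw [aux_sq_norm, h]
    simp only [inner_add_left, inner_add_right, real_inner_smul_left, real_inner_smul_right,
      hw_nv, hw_nv']
    rw [← aux_sq_norm, ← aux_sq_norm, hwnorm, hnv2]
    field_simp
    ring
  have hpav' : ∀ i : Fin d, ‖p i - av'‖^2 = 2 := by
    intro i
    have h : p i - av' = (w i : EuclideanSpace ℝ (Fin (d+1))) + ((1/2 : ℝ)) • nv := by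
      rw [hpdef]
      rw [show mv + (w i : EuclideanSpace ℝ (Fin (d+1))) - av'
        = (w i : EuclideanSpace ℝ (Fin (d+1))) + (mv - av') by abel, hmv_av']
    rw [aux_sq_norm, h]
    simp only [inner_add_left, inner_add_right, real_inner_smul_left, real_inner_smul_right,
      hw_nv, hw_nv']
    rw [← aux_sq_norm, ← aux_sq_norm, hwnorm, hnv2]
    field_simp
    ring
  -- non-unit distance facts for injectivity
  have hs2ne : Real.sqrt 2 ≠ 0 := by positivity
  have key_ne : ∀ (x y : EuclideanSpace ℝ (Fin (d+1))) (c : ℝ), ‖x - y‖^2 = c → c ≠ 0 → x ≠ y := by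
    intro x y c h hc heq
    rw [heq, sub_self, norm_zero] at h
    exact hc (by linarith [h])
  have hpav_ne : ∀ i, p i ≠ av := fun i => key_ne _ _ 2 (hpav i) two_ne_zero
  have hpav'_ne : ∀ i, p i ≠ av' := fun i => key_ne _ _ 2 (hpav' i) two_ne_zero
  have hava'_ne : av ≠ av' := by
    apply key_ne _ _ (4*(D+1)/D)
    · rw [← hnvdef]; exact hnv2
    · positivity
  have havv_ne : ∀ j, av ≠ v j := by
    intro j
    rcases eq_or_ne j i0 with rfl | hj
    · exact key_ne _ _ 2 hav_v0 two_ne_zero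
    · apply key_ne _ _ _ (hav_vj j hj)
      rcases eq_or_ne i2 j with h2j | h2j
      · rw [if_pos h2j, if_neg (by rw [← h2j]; exact h12)]
        nlinarith [hmu0]
      · rw [if_neg h2j]
        rcases eq_or_ne i1 j with h1j | h1j
        · rw [if_pos h1j]; nlinarith [hmu_lt1]
        · rw [if_neg h1j]; norm_num
  have hav'v_ne : ∀ j, av' ≠ v j := by
    intro j
    rcases eq_or_ne j i0 with rfl | hj
    · apply key_ne _ _ _ hav'_v0; positivity
    · exact key_ne _ _ 2 (hav'_vj j hj) two_ne_zero
  have hpv_ne : ∀ (i : Fin d) (j : Fin (d+1)), p i ≠ v j := by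
    intro i j heq
    rcases eq_or_ne j i0 with rfl | hj
    · have h1 : ‖av' - v i0‖^2 = ‖av' - p i‖^2 := by rw [heq]
      rw [hav'_v0, ← norm_neg, neg_sub, hpav' i] at h1
      have : 4*(D+1) = 2*D := by
        field_simp at h1
        linarith
      linarith
    · have h1 : ‖av - v j‖^2 = ‖av - p i‖^2 := by rw [heq]
      rw [hav_vj j hj, ← norm_neg, neg_sub, hpav i] at h1
      rcases eq_or_ne i2 j with h2j | h2j
      · rw [if_pos h2j, if_neg (by rw [← h2j]; exact h12)] at h1
        nlinarith [hmu0]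
      · rw [if_neg h2j] at h1
        rcases eq_or_ne i1 j with h1j | h1j
        · rw [if_pos h1j] at h1
          apply hmu_ne_half
          nlinarith [h1]
        · rw [if_neg h1j] at h1; norm_num at h1
  have hvv_ne : ∀ (ja jb : Fin (d+1)), ja ≠ jb → v ja ≠ v jb :=
    fun ja jb hj => key_ne _ _ 2 (hvv_dist ja jb hj) two_ne_zero
  have hpp_ne : ∀ (i i' : Fin d), i ≠ i' → p i ≠ p i' :=
    fun i i' hi => key_ne _ _ 2 (hpp i i' hi) two_ne_zero
  -- the final ambient subspace and isometry to ℝ^d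
  set Zf := (Submodule.span ℝ ({one} : Set (EuclideanSpace ℝ (Fin (d+1)))))ᗮ with hZfdef
  have hZfrank : Module.finrank ℝ Zf = d := by
    have h1 : Module.finrank ℝ (Submodule.span ℝ ({one} : Set (EuclideanSpace ℝ (Fin (d+1))))) = 1 :=
      finrank_span_singleton hone_ne
    have h2 := Submodule.finrank_add_finrank_orthogonal
      (K := Submodule.span ℝ ({one} : Set (EuclideanSpace ℝ (Fin (d+1)))))
    rw [← hZfdef] at h2
    have h3 : Module.finrank ℝ (EuclideanSpace ℝ (Fin (d+1))) = d + 1 := by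
      simp [finrank_euclideanSpace]
    omega
  have hfr : Module.finrank ℝ (EuclideanSpace ℝ (Fin d)) = Module.finrank ℝ Zf := by
    rw [hZfrank]; simp [finrank_euclideanSpace]
  let Φ : Zf ≃ₗᵢ[ℝ] EuclideanSpace ℝ (Fin d) :=
    (stdOrthonormalBasis ℝ Zf).repr.trans
      (((stdOrthonormalBasis ℝ (EuclideanSpace ℝ (Fin d))).reindex (finCongr hfr)).repr.symm)
  -- the index function
  set g : (Fin d ⊕ Bool ⊕ Fin (d+1)) → EuclideanSpace ℝ (Fin (d+1)) :=
    Sum.elim p (Sum.elim (fun b => cond b av av') v) with hgdef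
  have hg_p : ∀ i, g (Sum.inl i) = p i := fun i => rfl
  have hg_a : g (Sum.inr (Sum.inl true)) = av := rfl
  have hg_a' : g (Sum.inr (Sum.inl false)) = av' := rfl
  have hg_v : ∀ j, g (Sum.inr (Sum.inr j)) = v j := fun j => rfl
  have hone_g : ∀ idx, ⟪one, g idx - v i0⟫ = 0 := by
    intro idx
    rcases idx with i | b | j
    · rw [hg_p]
      have heq : p i - v i0 = ((lam+1)/2) • A1 + (mu/2) • W + (w i : EuclideanSpace ℝ (Fin (d+1))) := by
        rw [hpdef, hmvdef]; beta_reduce; abel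
      rw [heq]
      simp only [inner_add_right, real_inner_smul_right, hone_A1, hone_W, hw_one]
      ring
    · rcases b with _ | _
      · rw [hg_a']
        have heq : av' - v i0 = A1 := by rw [hav'def]; abel
        rw [heq, hone_A1]
      · rw [hg_a]
        have heq : av - v i0 = lam • A1 + mu • W := by rw [havdef]; abel
        rw [heq]
        simp only [inner_add_right, real_inner_smul_right, hone_A1, hone_W]
        ring
    · rw [hg_v, inner_sub_right, hone_v, hone_v]
      ring
  have hmemZ : ∀ idx, (Real.sqrt 2)⁻¹ • (g idx - v i0) ∈ Zf := by
    intro idx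
    apply Submodule.smul_mem
    rw [hZfdef, Submodule.mem_orthogonal]
    intro u hu
    rw [Submodule.mem_span_singleton] at hu
    obtain ⟨t, rfl⟩ := hu
    rw [real_inner_smul_left, hone_g idx, mul_zero]
  set f : (Fin d ⊕ Bool ⊕ Fin (d+1)) → EuclideanSpace ℝ (Fin d) :=
    fun idx => Φ ⟨(Real.sqrt 2)⁻¹ • (g idx - v i0), hmemZ idx⟩ with hfdef
  have hdistf : ∀ a b, dist (f a) (f b) = (Real.sqrt 2)⁻¹ * ‖g a - g b‖ := by
    intro a b
    rw [hfdef]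
    rw [Φ.dist_map]
    rw [Subtype.dist_eq, dist_eq_norm]
    have hc : ((⟨(Real.sqrt 2)⁻¹ • (g a - v i0), hmemZ a⟩ : Zf) : EuclideanSpace ℝ (Fin (d+1)))
        - ((⟨(Real.sqrt 2)⁻¹ • (g b - v i0), hmemZ b⟩ : Zf) : EuclideanSpace ℝ (Fin (d+1)))
        = (Real.sqrt 2)⁻¹ • (g a - g b) := by
      rw [← smul_sub]
      congr 1
      abel
    rw [hc, norm_smul, Real.norm_eq_abs, abs_of_nonneg (by positivity)]
  have hunit : ∀ a b, ‖g a - g b‖^2 = 2 → dist (f a) (f b) = 1 := by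
    intro a b h
    have hn : ‖g a - g b‖ = Real.sqrt 2 := by
      rw [← Real.sqrt_sq (norm_nonneg _), h]
    rw [hdistf, hn, inv_mul_cancel₀ hs2ne]
  -- injectivity
  have hgne : ∀ a b, a ≠ b → g a ≠ g b := by
    intro a b hab
    rcases a with i | ba | j <;> rcases b with i' | bb | j'
    · exact hpp_ne i i' (fun h => hab (by rw [h]))
    · rcases bb with _ | _
      · exact hpav'_ne i
      · exact hpav_ne i
    · exact hpv_ne i j'
    · rcases ba with _ | _
      · exact fun h => hpav'_ne i' h.symm
      · exact fun h => hpav_ne i' h.symm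
    · rcases ba with _ | _ <;> rcases bb with _ | _
      · exact (hab rfl).elim
      · exact fun h => hava'_ne h.symm
      · exact hava'_ne
      · exact (hab rfl).elim
    · rcases ba with _ | _
      · exact hav'v_ne j'
      · exact havv_ne j'
    · exact fun h => hpv_ne i' j h.symm
    · rcases bb with _ | _
      · exact fun h => hav'v_ne j h.symm
      · exact fun h => havv_ne j h.symm
    · exact hvv_ne j j' (fun h => hab (by rw [h]))
  have hfinj : Function.Injective f := by
    intro a b hab
    by_contra hne
    apply hgne a b hne
    have h0 : dist (f a) (f b) = 0 := by rw [hab, dist_self]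
    rw [hdistf] at h0
    rcases mul_eq_zero.1 h0 with h | h
    · exact absurd h (inv_ne_zero hs2ne)
    · exact sub_eq_zero.mp (norm_eq_zero.mp h)
  -- unit distances at the level of f
  have UPP : ∀ (i i' : Fin d), i ≠ i' →
      dist (f (Sum.inl i)) (f (Sum.inl i')) = 1 := by
    intro i i' h
    exact hunit _ _ (by rw [hg_p, hg_p]; exact hpp i i' h)
  have UPAb : ∀ (i : Fin d) (b : Bool),
      dist (f (Sum.inl i)) (f (Sum.inr (Sum.inl b))) = 1 := by
    intro i b
    rcases b with _ | _
    · exact hunit _ _ (by rw [hg_p, hg_a']; exact hpav' i)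
    · exact hunit _ _ (by rw [hg_p, hg_a]; exact hpav i)
  have UVV : ∀ (j j' : Fin (d+1)), j ≠ j' →
      dist (f (Sum.inr (Sum.inr j))) (f (Sum.inr (Sum.inr j'))) = 1 := by
    intro j j' h
    exact hunit _ _ (by rw [hg_v, hg_v]; exact hvv_dist j j' h)
  have UAV0 : dist (f (Sum.inr (Sum.inl true))) (f (Sum.inr (Sum.inr i0))) = 1 :=
    hunit _ _ (by rw [hg_a, hg_v]; exact hav_v0)
  have UA'V : ∀ (j : Fin (d+1)), j ≠ i0 →
      dist (f (Sum.inr (Sum.inl false))) (f (Sum.inr (Sum.inr j))) = 1 := by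
    intro j h
    exact hunit _ _ (by rw [hg_a', hg_v]; exact hav'_vj j h)
  have Dsymm : ∀ a b, dist (f a) (f b) = 1 → dist (f b) (f a) = 1 := by
    intro a b h; rwa [dist_comm]
  have htri : ∀ a b c, a ≠ b → b ≠ c → a ≠ c →
      dist (f a) (f b) = 1 ∨ dist (f b) (f c) = 1 ∨ dist (f a) (f c) = 1 := by
    intro a b c hab hbc hac
    rcases a with i | ba | j <;> rcases b with i' | bb | j' <;> rcases c with i'' | bc | j''
    · exact Or.inl (UPP i i' (fun h => hab (by rw [h])))
    · exact Or.inl (UPP i i' (fun h => hab (by rw [h])))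
    · exact Or.inl (UPP i i' (fun h => hab (by rw [h])))
    · exact Or.inl (UPAb i bb)
    · exact Or.inl (UPAb i bb)
    · exact Or.inl (UPAb i bb)
    · exact Or.inr (Or.inr (UPP i i'' (fun h => hac (by rw [h]))))
    · exact Or.inr (Or.inr (UPAb i bc))
    · exact Or.inr (Or.inl (UVV j' j'' (fun h => hbc (by rw [h]))))
    · exact Or.inr (Or.inl (UPP i' i'' (fun h => hbc (by rw [h]))))
    · exact Or.inl (Dsymm _ _ (UPAb i' ba))
    · exact Or.inl (Dsymm _ _ (UPAb i' ba))
    · exact Or.inr (Or.inl (Dsymm _ _ (UPAb i'' bb)))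
    · rcases ba with _ | _ <;> rcases bb with _ | _ <;> rcases bc with _ | _ <;>
        first
          | exact (hab rfl).elim
          | exact (hbc rfl).elim
          | exact (hac rfl).elim
    · rcases eq_or_ne j'' i0 with rfl | hne
      · rcases ba with _ | _ <;> rcases bb with _ | _
        · exact (hab rfl).elim
        · exact Or.inr (Or.inl UAV0)
        · exact Or.inr (Or.inr UAV0)
        · exact (hab rfl).elim
      · rcases ba with _ | _ <;> rcases bb with _ | _
        · exact (hab rfl).elim
        · exact Or.inr (Or.inr (UA'V j'' hne))
        · exact Or.inr (Or.inl (UA'V j'' hne))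
        · exact (hab rfl).elim
    · exact Or.inr (Or.inr (Dsymm _ _ (UPAb i'' ba)))
    · rcases eq_or_ne j' i0 with rfl | hne
      · rcases ba with _ | _ <;> rcases bc with _ | _
        · exact (hac rfl).elim
        · exact Or.inr (Or.inl (Dsymm _ _ UAV0))
        · exact Or.inl UAV0
        · exact (hac rfl).elim
      · rcases ba with _ | _ <;> rcases bc with _ | _
        · exact (hac rfl).elim
        · exact Or.inl (UA'V j' hne)
        · exact Or.inr (Or.inl (Dsymm _ _ (UA'V j' hne)))
        · exact (hac rfl).elim
    · exact Or.inr (Or.inl (UVV j' j'' (fun h => hbc (by rw [h]))))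
    · exact Or.inr (Or.inl (UPP i' i'' (fun h => hbc (by rw [h]))))
    · exact Or.inr (Or.inl (UPAb i' bc))
    · exact Or.inr (Or.inr (UVV j j'' (fun h => hac (by rw [h]))))
    · exact Or.inr (Or.inl (Dsymm _ _ (UPAb i'' bb)))
    · rcases eq_or_ne j i0 with rfl | hne
      · rcases bb with _ | _ <;> rcases bc with _ | _
        · exact (hbc rfl).elim
        · exact Or.inr (Or.inr (Dsymm _ _ UAV0))
        · exact Or.inl (Dsymm _ _ UAV0)
        · exact (hbc rfl).elim
      · rcases bb with _ | _ <;> rcases bc with _ | _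
        · exact (hbc rfl).elim
        · exact Or.inl (Dsymm _ _ (UA'V j hne))
        · exact Or.inr (Or.inr (Dsymm _ _ (UA'V j hne)))
        · exact (hbc rfl).elim
    · exact Or.inr (Or.inr (UVV j j'' (fun h => hac (by rw [h]))))
    · exact Or.inl (UVV j j' (fun h => hab (by rw [h])))
    · exact Or.inl (UVV j j' (fun h => hab (by rw [h])))
    · exact Or.inl (UVV j j' (fun h => hab (by rw [h])))
  refine ⟨Finset.image f Finset.univ, ?_, ?_⟩
  · intro x hx y hy z hz hxy hyz hxz
    rw [Finset.mem_image] at hx hy hz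
    obtain ⟨a, -, rfl⟩ := hx
    obtain ⟨b, -, rfl⟩ := hy
    obtain ⟨c, -, rfl⟩ := hz
    exact htri a b c (fun h => hxy (by rw [h])) (fun h => hyz (by rw [h]))
      (fun h => hxz (by rw [h]))
  · rw [Finset.card_image_of_injective _ hfinj, Finset.card_univ]
    simp only [Fintype.card_sum, Fintype.card_fin, Fintype.card_bool]
    omega
end
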